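/- Let Q be a free-connex acyclic conjunctive query and let Q' be a minimal conjunctive query equivalent to Q with head(Q') = head(Q) and body(Q') ⊆ body(Q). Then Q' is free-connex acyclic. -/

import Mathlib

/-- A relational atom (or fact): a relation symbol with a list of arguments.
Arguments are natural numbers, serving both as variables and as data values. -/
structure Atom where
  rel : ℕ
  args : List ℕ
deriving DecidableEq

/-- Apply a substitution to an atom. -/
def mapAtom (f : ℕ → ℕ) (A : Atom) : Atom := ⟨A.rel, A.args.map f⟩

/-- The variables of an atom. -/
def Atom.vars (A : Atom) : Finset ℕ := A.args.toFinset

/-- The variables of a finite set of atoms. -/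
def varsOf (B : Finset Atom) : Finset ℕ := B.biUnion Atom.vars

/-- A conjunctive query: a head atom and a finite set of body atoms. -/
structure CQ where
  head : Atom
  body : Finset Atom
deriving DecidableEq

/-- All variables of a conjunctive query. -/
def CQ.vars (Q : CQ) : Finset ℕ := Q.head.vars ∪ varsOf Q.body

/-- A schema: a set of relation symbols together with an arity function. -/
structure Schema where
  rels : Set ℕ
  ar : ℕ → ℕ

/-- An atom (or fact) over a schema. -/
def atomOver (σ : Schema) (A : Atom) : Prop :=
  A.rel ∈ σ.rels ∧ A.args.length = σ.ar A.rel

/-- `Q` is a (well-formed) conjunctive query over schema `σ`: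
nonempty body of σ-atoms, head relation symbol not in σ, and safety. -/
def isCQ (σ : Schema) (Q : CQ) : Prop :=
  Q.body.Nonempty ∧ (∀ A ∈ Q.body, atomOver σ A) ∧
  Q.head.rel ∉ σ.rels ∧ Q.head.vars ⊆ varsOf Q.body

/-- A database is a set of facts (finiteness is imposed where needed). -/
abbrev Database := Set Atom

/-- A database over a schema. -/
def isDBOver (σ : Schema) (D : Database) : Prop := ∀ F ∈ D, atomOver σ F

/-- The result of a conjunctive query on a database. -/
def evalCQ (Q : CQ) (D : Database) : Set Atom :=
  { F | ∃ ν : ℕ → ℕ, (∀ A ∈ Q.body, mapAtom ν A ∈ D) ∧ mapAtom ν Q.head = F }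

/-- Containment of conjunctive queries. -/
def containedCQ (Q1 Q2 : CQ) : Prop :=
  ∀ D : Database, D.Finite → evalCQ Q1 D ⊆ evalCQ Q2 D

/-- Equivalence of conjunctive queries. -/
def equivCQ (Q1 Q2 : CQ) : Prop :=
  ∀ D : Database, D.Finite → evalCQ Q1 D = evalCQ Q2 D

/-- A conjunctive query is minimal if no equivalent CQ has strictly fewer body atoms. -/
def isMinimal (Q : CQ) : Prop :=
  ∀ Q2 : CQ, equivCQ Q Q2 → Q.body.card ≤ Q2.body.card

/-- A homomorphism from `Q2` to `Q1`. -/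
def isHom (h : ℕ → ℕ) (Q2 Q1 : CQ) : Prop :=
  (∀ A ∈ Q2.body, mapAtom h A ∈ Q1.body) ∧ mapAtom h Q2.head = Q1.head

/-- A body homomorphism from `Q2` to `Q1`. -/
def isBodyHom (h : ℕ → ℕ) (Q2 Q1 : CQ) : Prop :=
  ∀ A ∈ Q2.body, mapAtom h A ∈ Q1.body

/-- A set of views over σ: each view is a CQ over σ and views have
pairwise distinct head relation symbols. -/
def isViewSet (σ : Schema) (𝒱 : Finset CQ) : Prop :=
  (∀ V ∈ 𝒱, isCQ σ V) ∧
  ∀ V ∈ 𝒱, ∀ W ∈ 𝒱, V ≠ W → V.head.rel ≠ W.head.rel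

/-- The 𝒱-defined database 𝒱(D). -/
def viewDB (𝒱 : Finset CQ) (D : Database) : Database :=
  ⋃ V ∈ 𝒱, evalCQ V D

/-- `Q'` is a CQ over the schema σ_𝒱 of the head relations of the views 𝒱. -/
def overViews (𝒱 : Finset CQ) (Q' : CQ) : Prop :=
  Q'.body.Nonempty ∧
  (∀ A ∈ Q'.body, ∃ V ∈ 𝒱, A.rel = V.head.rel ∧ A.args.length = V.head.args.length) ∧
  (∀ V ∈ 𝒱, Q'.head.rel ≠ V.head.rel) ∧
  Q'.head.vars ⊆ varsOf Q'.body

/-- `Q'` is a 𝒱-rewriting of `Q`: `Q'` is over σ_𝒱 and `Q'(𝒱(D)) = Q(D)`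
for every (finite) database `D` over σ. -/
def isRewriting (σ : Schema) (𝒱 : Finset CQ) (Q Q' : CQ) : Prop :=
  overViews 𝒱 Q' ∧
  ∀ D : Database, D.Finite → isDBOver σ D →
    evalCQ Q' (viewDB 𝒱 D) = evalCQ Q D

/-- `T` is a join tree for the atom set `B`. -/
def joinTreeProp (B : Finset Atom) (T : SimpleGraph {A : Atom // A ∈ B}) : Prop :=
  T.IsTree ∧
  ∀ (x : ℕ) (A A' : {A : Atom // A ∈ B}) (p : T.Walk A A'), p.IsPath →
    x ∈ A.1.vars → x ∈ A'.1.vars → ∀ C ∈ p.support, x ∈ C.1.vars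

/-- The atom set `B` has a join tree. -/
def hasJoinTree (B : Finset Atom) : Prop :=
  ∃ T : SimpleGraph {A : Atom // A ∈ B}, joinTreeProp B T

/-- A conjunctive query is acyclic if its body has a join tree. -/
def isAcyclicCQ (Q : CQ) : Prop := hasJoinTree Q.body

/-- A conjunctive query is free-connex acyclic. -/
def isFreeConnex (Q : CQ) : Prop :=
  isAcyclicCQ Q ∧ hasJoinTree (insert Q.head Q.body)

/-- The bridge variables of `𝒜 ⊆ body(Q)`. -/
def bvars (Q : CQ) (𝒜 : Finset Atom) : Finset ℕ :=
  varsOf 𝒜 ∩ (Q.head.vars ∪ varsOf (Q.body \ 𝒜))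

/-- An application of a view `V`: a substitution that does not unify any
quantified variable of `V` with another variable of `V`. -/
def isApplication (V : CQ) (α : ℕ → ℕ) : Prop :=
  ∀ x ∈ varsOf V.body, x ∉ V.head.vars →
    ∀ y ∈ CQ.vars V, y ≠ x → α x ≠ α y

/-- The query α(V). -/
def applyCQ (α : ℕ → ℕ) (V : CQ) : CQ :=
  ⟨mapAtom α V.head, V.body.image (mapAtom α)⟩

/-- `(𝒜, V, α, ψ)` is a cover description for `Q`. -/
def isCoverDesc (Q : CQ) (𝒜 : Finset Atom) (V : CQ) (α ψ : ℕ → ℕ) : Prop :=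
  𝒜 ⊆ Q.body ∧ isApplication V α ∧
  𝒜 ⊆ V.body.image (mapAtom α) ∧
  bvars Q 𝒜 ⊆ V.head.vars.image α ∧
  isBodyHom ψ (applyCQ α V) Q ∧
  ∀ x ∈ varsOf 𝒜, ψ x = x

/-- A cover partition for `Q` over `𝒱`: a collection of cover descriptions
whose atom sets partition `body(Q)`. -/
def isCoverPartition (Q : CQ) (𝒱 : Finset CQ) (m : ℕ)
    (𝒜 : Fin m → Finset Atom) (V : Fin m → CQ) (α ψ : Fin m → ℕ → ℕ) : Prop :=
  (∀ i, V i ∈ 𝒱 ∧ isCoverDesc Q (𝒜 i) (V i) (α i) (ψ i)) ∧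
  ∀ A ∈ Q.body, ∃! i, A ∈ 𝒜 i

/-- Consistency of a cover partition: a variable of any `α_j(V_j)` lies in the
range of another `α_i` only if it also lies in `bvars(𝒜_j)`. -/
def isConsistent (Q : CQ) (m : ℕ) (𝒜 : Fin m → Finset Atom) (V : Fin m → CQ)
    (α : Fin m → ℕ → ℕ) : Prop :=
  ∀ i j : Fin m, i ≠ j → ∀ z ∈ CQ.vars (applyCQ (α j) (V j)),
    (∃ x ∈ CQ.vars (V i), α i x = z) → z ∈ bvars Q (𝒜 j)

/-- The query `Q_𝒞` induced by a (consistent) cover partition. -/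
def inducedCQ (Q : CQ) (m : ℕ) (V : Fin m → CQ) (α : Fin m → ℕ → ℕ) : CQ :=
  ⟨Q.head, Finset.image (fun i => mapAtom (α i) (V i).head) Finset.univ⟩

/-- Quantified variable disjointness for a family of view applications. -/
def QVD (m : ℕ) (V : Fin m → CQ) (α : Fin m → ℕ → ℕ) : Prop :=
  ∀ i j : Fin m, i ≠ j → ∀ x ∈ varsOf (V i).body, x ∉ (V i).head.vars →
    ∀ y ∈ CQ.vars (V j), α i x ≠ α j y

/-- `QE` is an expansion of `Q'` with respect to the views `𝒱`. -/
def isExpansion (𝒱 : Finset CQ) (Q' QE : CQ) : Prop :=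
  ∃ (m : ℕ) (A' : Fin m → Atom) (V : Fin m → CQ) (α : Fin m → ℕ → ℕ),
    (∀ i, V i ∈ 𝒱 ∧ isApplication (V i) (α i) ∧ A' i = mapAtom (α i) (V i).head) ∧
    Q'.body = Finset.image A' Finset.univ ∧
    QVD m V α ∧
    QE.head = Q'.head ∧
    QE.body = Finset.biUnion Finset.univ (fun i => (V i).body.image (mapAtom (α i)))

/-- `atoms(x)`: the body atoms of `Q` containing the variable `x`. -/
def atomsWith (Q : CQ) (x : ℕ) : Finset Atom :=
  Q.body.filter (fun A => x ∈ A.vars)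

/-- Hierarchical conjunctive queries. -/
def isHierarchical (Q : CQ) : Prop :=
  ∀ x y : ℕ, atomsWith Q x ⊆ atomsWith Q y ∨ atomsWith Q y ⊆ atomsWith Q x ∨
    atomsWith Q x ∩ atomsWith Q y = ∅

/-- q-hierarchical conjunctive queries. -/
def isQHierarchical (Q : CQ) : Prop :=
  isHierarchical Q ∧ ∀ x y : ℕ, atomsWith Q x ⊂ atomsWith Q y →
    x ∈ Q.head.vars → y ∈ Q.head.vars

/-- `P` is a partition of `body(Q)` witnessing weak head arity at most `k`. -/
def witnessesWHA (Q : CQ) (k n : ℕ) (P : Fin n → Finset Atom) : Prop :=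
  (∀ i, (P i).Nonempty) ∧ (∀ i, P i ⊆ Q.body) ∧ (∀ A ∈ Q.body, ∃! i, A ∈ P i) ∧
  (∀ i, (varsOf (P i) ∩ Q.head.vars).card ≤ k) ∧
  (∀ i j, i ≠ j → ∀ x ∈ varsOf (P i), x ∈ varsOf (P j) → x ∈ Q.head.vars)

/-- `Q` has weak head arity at most `k`. -/
def hasWHAle (Q : CQ) (k : ℕ) : Prop := ∃ n P, witnessesWHA Q k n P

/-- The weak head arity of `Q`. -/
noncomputable def weakHeadArity (Q : CQ) : ℕ := sInf {k | hasWHAle Q k}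

/-- The cover graph of `Q`: vertices are the body atoms, with an edge between
two atoms iff they share a variable not occurring in the head. -/
def coverGraph (Q : CQ) : SimpleGraph {A : Atom // A ∈ Q.body} :=
  SimpleGraph.fromRel (fun A B => ∃ x, x ∈ A.1.vars ∧ x ∈ B.1.vars ∧ x ∉ Q.head.vars)

/-- A subset `s` of the atom set `B` is connected in the (join) tree `T`. -/
def connectedIn (B : Finset Atom) (T : SimpleGraph {A : Atom // A ∈ B}) (s : Finset Atom) : Prop :=
  (T.induce {A : {A : Atom // A ∈ B} | A.1 ∈ s}).Connected

/-! ### Auxiliary lemmas for Statement 16 -/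

section Aux

lemma mapAtom_id' (A : Atom) : mapAtom id A = A := by
  simp [mapAtom]

lemma mapAtom_mapAtom (f g : ℕ → ℕ) (A : Atom) :
    mapAtom g (mapAtom f A) = mapAtom (g ∘ f) A := by
  simp [mapAtom]

lemma mapAtom_congr {f g : ℕ → ℕ} (A : Atom) (h : ∀ x ∈ A.vars, f x = g x) :
    mapAtom f A = mapAtom g A := by
  unfold mapAtom
  congr 1
  exact List.map_congr_left fun x hx => h x (by simp [Atom.vars, hx])

lemma list_map_eq_self {f : ℕ → ℕ} : ∀ {l : List ℕ}, l.map f = l → ∀ x ∈ l, f x = x := by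
  intro l
  induction l with
  | nil => simp
  | cons a t ih =>
    intro h x hx
    simp only [List.map_cons, List.cons.injEq] at h
    rcases List.mem_cons.mp hx with rfl | hx
    · exact h.1
    · exact ih h.2 x hx

lemma mapAtom_eq_self {f : ℕ → ℕ} (A : Atom) (h : ∀ x ∈ A.vars, f x = x) :
    mapAtom f A = A := by
  unfold mapAtom
  have : A.args.map f = A.args.map id := by
    apply List.map_congr_left
    intro x hx
    exact h x (by simp [Atom.vars, hx])
  rw [this, List.map_id]

lemma eq_self_of_mapAtom_eq {f : ℕ → ℕ} {A : Atom} (h : mapAtom f A = A) :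
    ∀ x ∈ A.vars, f x = x := by
  intro x hx
  have harg : A.args.map f = A.args := congrArg Atom.args h
  simp only [Atom.vars, List.mem_toFinset] at hx
  exact list_map_eq_self harg x hx

lemma mem_vars_mapAtom {f : ℕ → ℕ} {A : Atom} {x : ℕ} (hx : x ∈ A.vars) :
    f x ∈ (mapAtom f A).vars := by
  simp only [Atom.vars, List.mem_toFinset, mapAtom] at hx ⊢
  exact List.mem_map_of_mem (f := f) hx

lemma mem_varsOf {x : ℕ} {B : Finset Atom} : x ∈ varsOf B ↔ ∃ A ∈ B, x ∈ A.vars := by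
  simp [varsOf]

/-- A homomorphism (on bodies, preserving heads) yields query containment. -/
lemma eval_subset_of_hom {Q1 Q2 : CQ} (k : ℕ → ℕ)
    (hb : ∀ A ∈ Q2.body, mapAtom k A ∈ Q1.body) (hh : mapAtom k Q2.head = Q1.head) :
    ∀ D : Database, evalCQ Q1 D ⊆ evalCQ Q2 D := by
  intro D F hF
  obtain ⟨ν, hν, hνh⟩ := hF
  refine ⟨ν ∘ k, ?_, ?_⟩
  · intro A hA
    rw [← mapAtom_mapAtom]
    exact hν _ (hb A hA)
  · rw [← mapAtom_mapAtom, hh, hνh]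

end Aux

section Retraction

/-- Part 1: existence of a retraction from `Q` onto `Q'`. -/
lemma exists_retraction (Q Q' : CQ) (hQ : Q.head.vars ⊆ varsOf Q.body)
    (hmin : isMinimal Q') (hequiv : equivCQ Q Q')
    (hhead : Q'.head = Q.head) (hbody : Q'.body ⊆ Q.body) :
    ∃ h : ℕ → ℕ, (∀ A ∈ Q.body, mapAtom h A ∈ Q'.body) ∧
      (∀ x ∈ varsOf Q'.body, h x = x) ∧ (∀ x ∈ Q.head.vars, h x = x) := by
  classical
  -- canonical database
  have hhd : Q'.head ∈ evalCQ Q' (↑Q'.body : Set Atom) := by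
    refine ⟨id, ?_, mapAtom_id' _⟩
    intro A hA; rw [mapAtom_id']; exact hA
  have hQev : Q'.head ∈ evalCQ Q (↑Q'.body : Set Atom) := by
    rw [hequiv _ (Q'.body.finite_toSet)]; exact hhd
  obtain ⟨ν, hν, hνh⟩ := hQev
  rw [hhead] at hνh
  have hνfix : ∀ x ∈ Q.head.vars, ν x = x := eq_self_of_mapAtom_eq hνh
  -- trim ν to be the identity outside S
  set S : Finset ℕ := varsOf Q.body with hS
  set g : ℕ → ℕ := fun x => if x ∈ S then ν x else x with hg
  have hgbody : ∀ A ∈ Q.body, mapAtom g A = mapAtom ν A := by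
    intro A hA
    refine mapAtom_congr A fun x hx => ?_
    simp only [hg, if_pos (mem_varsOf.mpr ⟨A, hA, hx⟩)]
    exact if_pos (mem_varsOf.mpr ⟨A, hA, hx⟩)
  have hgmem : ∀ A ∈ Q.body, mapAtom g A ∈ Q'.body := by
    intro A hA; rw [hgbody A hA]
    simpa using hν A hA
  have hgS : ∀ x ∈ S, g x ∈ S := by
    intro x hx
    obtain ⟨A, hA, hxA⟩ := mem_varsOf.mp hx
    have : g x ∈ (mapAtom g A).vars := mem_vars_mapAtom hxA
    have h2 := hgmem A hA
    exact mem_varsOf.mpr ⟨mapAtom g A, hbody h2, this⟩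
  have hgid : ∀ x, x ∉ S → g x = x := fun x hx => by simp [hg, hx]
  have hghd : ∀ x ∈ Q.head.vars, g x = x := by
    intro x hx
    have hxS : x ∈ S := hQ hx
    simp [hg, hxS, hνfix x hx]
  -- iterates stay in place
  have hiterS : ∀ (k : ℕ) (x : ℕ), x ∈ S → g^[k] x ∈ S := by
    intro k
    induction k with
    | zero => simpa using fun x h => h
    | succ n ih =>
      intro x hx
      rw [Function.iterate_succ_apply]
      exact ih _ (hgS x hx)
  have hiterId : ∀ (k : ℕ) (x : ℕ), x ∉ S → g^[k] x = x := by
    intro k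
    induction k with
    | zero => simp
    | succ n ih =>
      intro x hx
      rw [Function.iterate_succ_apply, hgid x hx]
      exact ih x hx
  -- find an idempotent iterate
  obtain ⟨k₁, k₂, hk12, hFeq⟩ :
      ∃ k₁ k₂ : ℕ, k₁ ≠ k₂ ∧ g^[k₁] = g^[k₂] := by
    have : ∃ k₁ k₂ : ℕ, k₁ ≠ k₂ ∧
        (fun x : {x // x ∈ S} => (⟨g^[k₁] x.1, hiterS _ _ x.2⟩ : {x // x ∈ S}))
        = (fun x : {x // x ∈ S} => (⟨g^[k₂] x.1, hiterS _ _ x.2⟩ : {x // x ∈ S})) := by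
      obtain ⟨k₁, k₂, hne, heq⟩ := Finite.exists_ne_map_eq_of_infinite
        (fun k : ℕ => (fun x : {x // x ∈ S} =>
          (⟨g^[k] x.1, hiterS _ _ x.2⟩ : {x // x ∈ S})))
      exact ⟨k₁, k₂, hne, heq⟩
    obtain ⟨k₁, k₂, hne, heq⟩ := this
    refine ⟨k₁, k₂, hne, funext fun x => ?_⟩
    by_cases hx : x ∈ S
    · have := congrFun heq ⟨x, hx⟩
      simpa using congrArg Subtype.val this
    · rw [hiterId k₁ x hx, hiterId k₂ x hx]
  wlog hlt : k₁ < k₂ generalizing k₁ k₂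
  · exact this k₂ k₁ (Ne.symm hk12) hFeq.symm (by omega)
  set p := k₂ - k₁ with hp
  have hppos : 0 < p := by omega
  have hper : ∀ m, k₁ ≤ m → g^[m + p] = g^[m] := by
    intro m hm
    have h1 : m + p = (m - k₁) + k₂ := by omega
    have h2 : m = (m - k₁) + k₁ := by omega
    rw [h1, Function.iterate_add, ← hFeq, ← Function.iterate_add, ← h2]
  set n := (k₁ + 1) * p with hn
  have hn1 : 1 ≤ n := Nat.one_le_iff_ne_zero.mpr (by positivity)
  have hnk : k₁ ≤ n := le_trans (Nat.le_succ k₁) (Nat.le_mul_of_pos_right _ hppos)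
  have hrep : ∀ j : ℕ, g^[n + j * p] = g^[n] := by
    intro j
    induction j with
    | zero => simp
    | succ i ih =>
      have : n + (i + 1) * p = (n + i * p) + p := by ring
      rw [this, hper _ (le_trans hnk (Nat.le_add_right _ _)), ih]
  have hidem : ∀ x, g^[n] (g^[n] x) = g^[n] x := by
    intro x
    have h1 : g^[n + n] = g^[n] := by
      have : n = (k₁ + 1) * p := hn
      calc g^[n + n] = g^[n + (k₁ + 1) * p] := by rw [← hn]
        _ = g^[n] := hrep (k₁ + 1)
    calc g^[n] (g^[n] x) = g^[n + n] x := by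
          rw [Function.iterate_add_apply]
      _ = g^[n] x := by rw [h1]
  -- h := g^[n]
  set h : ℕ → ℕ := g^[n] with hdefh
  have hmem : ∀ A ∈ Q.body, mapAtom h A ∈ Q'.body := by
    have key : ∀ m : ℕ, 1 ≤ m → ∀ A ∈ Q.body, mapAtom (g^[m]) A ∈ Q'.body := by
      intro m
      induction m with
      | zero => omega
      | succ i ih =>
        intro _ A hA
        by_cases hi : 1 ≤ i
        · have h1 := ih hi A hA
          have : mapAtom (g^[i + 1]) A = mapAtom g (mapAtom (g^[i]) A) := by
            rw [mapAtom_mapAtom, ← Function.iterate_succ']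
          rw [this]
          rw [hgbody _ (hbody h1)]
          simpa using hν _ (hbody h1)
        · have hi0 : i = 0 := by omega
          subst hi0
          simpa [Function.iterate_one] using hgmem A hA
    exact key n hn1
  have hheadfix : ∀ x ∈ Q.head.vars, h x = x := by
    intro x hx
    have : ∀ k : ℕ, g^[k] x = x := by
      intro k
      induction k with
      | zero => simp
      | succ i ih => rw [Function.iterate_succ_apply, hghd x hx, ih]
    exact this n
  -- minimality forces h to fix Q'.body pointwise
  have hQ''equiv : equivCQ Q' ⟨Q'.head, Q'.body.image (mapAtom h)⟩ := by
    intro D hD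
    apply Set.Subset.antisymm
    · -- eval Q' ⊆ eval Q'' via identity hom from Q'' to Q'
      refine eval_subset_of_hom (Q1 := Q') (Q2 := ⟨Q'.head, Q'.body.image (mapAtom h)⟩)
        id ?_ (mapAtom_id' _) D
      intro A hA
      rw [mapAtom_id']
      simp only [Finset.mem_image] at hA
      obtain ⟨A₀, hA₀, rfl⟩ := hA
      exact hmem A₀ (hbody hA₀)
    · -- eval Q'' ⊆ eval Q' via h from Q' to Q''
      refine eval_subset_of_hom (Q1 := ⟨Q'.head, Q'.body.image (mapAtom h)⟩) (Q2 := Q')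
        h ?_ ?_ D
      · intro A hA
        exact Finset.mem_image_of_mem _ hA
      · rw [hhead]
        exact mapAtom_eq_self _ hheadfix
  have hcard := hmin _ hQ''equiv
  have hsub'' : Q'.body.image (mapAtom h) ⊆ Q'.body := by
    intro A hA
    simp only [Finset.mem_image] at hA
    obtain ⟨A₀, hA₀, rfl⟩ := hA
    exact hmem A₀ (hbody hA₀)
  have hcard2 : (Q'.body.image (mapAtom h)).card = Q'.body.card := by
    have h1 := Finset.card_le_card hsub''
    simp only at hcard
    omega
  have hinj : Set.InjOn (mapAtom h) ↑Q'.body := Finset.injOn_of_card_image_eq hcard2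
  have hfixatoms : ∀ A ∈ Q'.body, mapAtom h A = A := by
    intro A hA
    have h1 : mapAtom h (mapAtom h A) = mapAtom h A := by
      rw [mapAtom_mapAtom]
      exact mapAtom_congr A fun x _ => hidem x
    exact hinj (hsub'' (Finset.mem_image_of_mem _ hA)) hA h1
  refine ⟨h, hmem, ?_, hheadfix⟩
  intro x hx
  obtain ⟨A, hA, hxA⟩ := mem_varsOf.mp hx
  exact eq_self_of_mapAtom_eq (hfixatoms A hA) x hxA

end Retraction

section Surgery

open SimpleGraph Walk

variable {V : Type} [DecidableEq V]

/-- The graph `T` with vertex `a` deleted. -/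
def Dgr (T : SimpleGraph V) (a : V) : SimpleGraph {v : V // v ≠ a} :=
  SimpleGraph.comap Subtype.val T

/-- `T` minus `a`, plus edges from `b` to each former neighbor of `a` that cannot
reach `b` while avoiding `a`. -/
def Tnew (T : SimpleGraph V) (a : V) {b : V} (hb : b ≠ a) : SimpleGraph {v : V // v ≠ a} where
  Adj u v := (Dgr T a).Adj u v ∨
    (↑u = b ∧ T.Adj a ↑v ∧ ¬ (Dgr T a).Reachable v ⟨b, hb⟩) ∨
    (↑v = b ∧ T.Adj a ↑u ∧ ¬ (Dgr T a).Reachable u ⟨b, hb⟩)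
  symm := by
    refine ⟨fun u v hadj => ?_⟩
    rcases hadj with h | h | h
    · exact Or.inl h.symm
    · exact Or.inr (Or.inr h)
    · exact Or.inr (Or.inl h)
  loopless := by
    refine ⟨fun u hadj => ?_⟩
    rcases hadj with h | h | h
    · exact (Dgr T a).loopless.irrefl u h
    · exact h.2.2 (by rw [show u = ⟨b, hb⟩ from Subtype.ext h.1])
    · exact h.2.2 (by rw [show u = ⟨b, hb⟩ from Subtype.ext h.1])

lemma Tnew_adj_of_dgr {T : SimpleGraph V} {a b : V} {hb : b ≠ a} {u v : {v : V // v ≠ a}}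
    (h : (Dgr T a).Adj u v) : (Tnew T a hb).Adj u v := Or.inl h

/-- Lift a walk of `T` avoiding `a` to a walk of `Dgr T a`. -/
lemma lift_walk {T : SimpleGraph V} {a : V} :
    ∀ {x y : V} (p : T.Walk x y) (_ : ∀ v ∈ p.support, v ≠ a)
      (hx : x ≠ a) (hy : y ≠ a),
      ∃ q : (Dgr T a).Walk ⟨x, hx⟩ ⟨y, hy⟩, q.support.map Subtype.val = p.support := by
  intro x y p
  induction p with
  | nil => intro _ hx hy; exact ⟨Walk.nil, rfl⟩
  | @cons x w y hadj q ih =>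
    intro hsup hx hy
    have hw : w ≠ a := hsup w (by simp)
    obtain ⟨q', hq'⟩ := ih (fun v hv => hsup v (by simp [hv])) hw hy
    exact ⟨Walk.cons (by exact hadj : (Dgr T a).Adj ⟨x, hx⟩ ⟨w, hw⟩) q', by show x :: q'.support.map Subtype.val = x :: q.support; rw [hq']⟩

/-- Project a walk of `Dgr T a` to a walk of `T`. -/
lemma proj_walk {T : SimpleGraph V} {a : V} :
    ∀ {u v : {v : V // v ≠ a}} (q : (Dgr T a).Walk u v),
      ∃ p : T.Walk ↑u ↑v, p.support = q.support.map Subtype.val := by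
  intro u v q
  induction q with
  | nil => exact ⟨Walk.nil, rfl⟩
  | @cons u w v hadj q ih =>
    obtain ⟨p, hp⟩ := ih
    exact ⟨Walk.cons hadj p, by show ↑u :: p.support = ↑u :: q.support.map Subtype.val; rw [hp]⟩

/-- A walk of `Dgr T a` is a walk of `Tnew T a hb` with the same support. -/
lemma dgr_to_new {T : SimpleGraph V} {a b : V} {hb : b ≠ a} :
    ∀ {u v : {v : V // v ≠ a}} (q : (Dgr T a).Walk u v),
      ∃ p : (Tnew T a hb).Walk u v, p.support = q.support := by
  intro u v q
  induction q with
  | nil => exact ⟨Walk.nil, rfl⟩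
  | cons hadj q ih =>
    obtain ⟨p, hp⟩ := ih
    exact ⟨Walk.cons (Or.inl hadj) p, by show _ :: p.support = _ :: q.support; rw [hp]⟩

/-- A walk of `Tnew T a hb` avoiding `⟨b, hb⟩` is a walk of `Dgr T a`. -/
lemma new_to_dgr {T : SimpleGraph V} {a b : V} {hb : b ≠ a} :
    ∀ {u v : {v : V // v ≠ a}} (p : (Tnew T a hb).Walk u v)
      (_ : ∀ t ∈ p.support, t ≠ ⟨b, hb⟩),
      ∃ q : (Dgr T a).Walk u v, q.support = p.support := by
  intro u v p
  induction p with
  | nil => intro _; exact ⟨Walk.nil, rfl⟩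
  | @cons u w v hadj p ih =>
    intro hsup
    obtain ⟨q, hq⟩ := ih (fun t ht => hsup t (by simp [ht]))
    have hu : u ≠ ⟨b, hb⟩ := hsup u (by simp)
    have hw : w ≠ ⟨b, hb⟩ := hsup w (by simp)
    have hD : (Dgr T a).Adj u w := by
      rcases hadj with h | h | h
      · exact h
      · exact absurd (Subtype.ext h.1) hu
      · exact absurd (Subtype.ext h.1) hw
    exact ⟨Walk.cons hD q, by simp [hq]⟩

/-- Uniqueness of paths in an acyclic graph, on the level of walks. -/
lemma path_eq_of_acyclic {W : Type} {G : SimpleGraph W} (hG : G.IsAcyclic) {x y : W}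
    (p q : G.Walk x y) (hp : p.IsPath) (hq : q.IsPath) : p = q := by
  have := isAcyclic_iff_path_unique.mp hG (⟨p, hp⟩ : G.Path x y) ⟨q, hq⟩
  exact congrArg Subtype.val this

lemma Tnew_reach_b {T : SimpleGraph V} (hT : T.IsTree) (a b : V) (hb : b ≠ a) :
    ∀ w : {v : V // v ≠ a}, (Tnew T a hb).Reachable w ⟨b, hb⟩ := by
  intro w
  by_cases hR : (Dgr T a).Reachable w ⟨b, hb⟩
  · obtain ⟨q⟩ := hR
    obtain ⟨p, _⟩ := dgr_to_new (hb := hb) q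
    exact ⟨p⟩
  · obtain ⟨p0⟩ := hT.isConnected.preconnected ↑w b
    set p : T.Walk ↑w b := (p0.toPath : T.Walk ↑w b) with hpdef
    have hppath : p.IsPath := p0.toPath.2
    have hamem : a ∈ p.support := by
      by_contra hna
      obtain ⟨q, _⟩ := lift_walk (a := a) p (fun v hv hva => hna (hva ▸ hv)) w.2 hb
      exact hR ⟨q⟩
    set q1 : T.Walk ↑w a := p.takeUntil a hamem with hq1def
    have hq1path : q1.IsPath := hppath.takeUntil hamem
    have hne : a ≠ ↑w := fun hh => w.2 hh.symm
    obtain ⟨y, hadj1, q2, hq2eq⟩ := Walk.exists_eq_cons_of_ne hne q1.reverse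
    have hq2path : q2.IsPath := by
      have := hq1path.reverse
      rw [hq2eq] at this
      exact this.of_cons
    have hanq2 : a ∉ q2.support := by
      have := hq1path.reverse
      rw [hq2eq] at this
      rw [Walk.cons_isPath_iff] at this
      exact this.2
    have hy : y ≠ a := fun hya => hanq2 (hya ▸ q2.start_mem_support)
    obtain ⟨q2', _⟩ := lift_walk (a := a) q2 (fun v hv hva => hanq2 (hva ▸ hv)) hy w.2
    have hyreach : ¬ (Dgr T a).Reachable ⟨y, hy⟩ ⟨b, hb⟩ := by
      intro hr
      exact hR ((Reachable.symm ⟨q2'⟩).trans hr)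
    have hedge : (Tnew T a hb).Adj ⟨y, hy⟩ ⟨b, hb⟩ :=
      Or.inr (Or.inr ⟨rfl, hadj1, hyreach⟩)
    obtain ⟨q2'', _⟩ := dgr_to_new (hb := hb) q2'
    exact (Reachable.symm ⟨q2''⟩).trans (Adj.reachable hedge)

lemma Tnew_connected {T : SimpleGraph V} (hT : T.IsTree) (a b : V) (hb : b ≠ a) :
    (Tnew T a hb).Connected := by
  rw [connected_iff]
  refine ⟨fun u v => (Tnew_reach_b hT a b hb u).trans (Tnew_reach_b hT a b hb v).symm, ⟨⟨b, hb⟩⟩⟩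

lemma val_ne_b_of_ne {a b : V} {hb : b ≠ a} {t : {v : V // v ≠ a}}
    (h : t ≠ ⟨b, hb⟩) : (t : V) ≠ b := fun hh => h (Subtype.ext hh)

lemma Tnew_adj_b {T : SimpleGraph V} {a b : V} {hb : b ≠ a} {u : {v : V // v ≠ a}}
    (h : (Tnew T a hb).Adj ⟨b, hb⟩ u) :
    (Dgr T a).Adj ⟨b, hb⟩ u ∨ (T.Adj a ↑u ∧ ¬(Dgr T a).Reachable u ⟨b, hb⟩) := by
  rcases h with h | h | h
  · exact Or.inl h
  · exact Or.inr ⟨h.2.1, h.2.2⟩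
  · exact absurd (Reachable.refl _) h.2.2

lemma Tnew_acyclic {T : SimpleGraph V} (hT : T.IsTree) (a b : V) (hb : b ≠ a) :
    (Tnew T a hb).IsAcyclic := by
  have hAc := hT.IsAcyclic
  intro v0 c hc
  by_cases hbv : (⟨b, hb⟩ : {v : V // v ≠ a}) ∈ c.support
  case neg =>
    cases c with
    | nil => simpa using hc.three_le_length
    | @cons _ y _ hadj w =>
      have hcparts := (Walk.cons_isCycle_iff w hadj).mp hc
      have hsupsub : ∀ t ∈ w.support, t ≠ (⟨b, hb⟩ : {v : V // v ≠ a}) := by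
        intro t ht hteq
        exact hbv (by rw [← hteq] at *; simp [Walk.support_cons, ht])
      obtain ⟨q, hq⟩ := new_to_dgr w hsupsub
      obtain ⟨py, hpy⟩ := proj_walk q
      have hpypath : py.IsPath := by
        rw [Walk.isPath_def, hpy, hq]
        exact (List.nodup_map_iff Subtype.coe_injective).mpr hcparts.1.support_nodup
      have hv0bw : v0 ≠ (⟨b, hb⟩ : {v : V // v ≠ a}) := by
        intro hh; exact hbv (by rw [← hh]; simp)
      have hybw : y ≠ (⟨b, hb⟩ : {v : V // v ≠ a}) :=
        hsupsub y w.start_mem_support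
      have hD : (Dgr T a).Adj v0 y := by
        rcases hadj with h | h | h
        · exact h
        · exact absurd (Subtype.ext h.1) hv0bw
        · exact absurd (Subtype.ext h.1) hybw
      have hadjT : T.Adj ↑y ↑v0 := hD.symm
      set P1 : T.Walk ↑y ↑v0 := Walk.cons hadjT Walk.nil with hP1def
      have hP1 : P1.IsPath := by
        simp [hP1def, Walk.isPath_def, hadjT.ne]
      have := path_eq_of_acyclic hAc P1 py hP1 hpypath
      have hlen : P1.length = py.length := congrArg Walk.length this
      have hlen2 : py.length = w.length := by
        have h1 : py.support.length = w.support.length := by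
          rw [hpy, hq, List.length_map]
        have h2 := py.length_support
        have h3 := w.length_support
        omega
      have h3 : 3 ≤ (Walk.cons hadj w).length := hc.three_le_length
      simp only [Walk.length_cons] at h3
      simp only [hP1def, Walk.length_cons, Walk.length_nil] at hlen
      omega
  case pos =>
    have hc' : (c.rotate _ hbv).IsCycle := hc.rotate hbv
    cases hrot : c.rotate _ hbv with
    | nil =>
      rw [hrot] at hc'
      simpa using hc'.three_le_length
    | @cons _ y _ hadj1 w₁ =>
      rw [hrot] at hc'
      have hcp := (Walk.cons_isCycle_iff w₁ hadj1).mp hc'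
      have hw₁path : w₁.IsPath := hcp.1
      have hyne : (⟨b, hb⟩ : {v : V // v ≠ a}) ≠ y := hadj1.ne
      obtain ⟨z, hadj2, w₄, hrev⟩ := Walk.exists_eq_cons_of_ne hyne w₁.reverse
      have hrevpath : w₁.reverse.IsPath := hw₁path.reverse
      rw [hrev] at hrevpath
      have hw₄path : w₄.IsPath := hrevpath.of_cons
      have hbw4 : (⟨b, hb⟩ : {v : V // v ≠ a}) ∉ w₄.support :=
        ((Walk.cons_isPath_iff _ _).mp hrevpath).2
      have hz : z ≠ ⟨b, hb⟩ := fun hh => hbw4 (hh ▸ w₄.start_mem_support)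
      have hyz : y ≠ z := by
        intro hh
        subst hh
        have hnil : w₄ = Walk.nil := Walk.isPath_iff_eq_nil.mp hw₄path
        have hl1 : w₁.reverse.length = 1 := by rw [hrev, hnil]; simp
        have hl2 : w₁.length = 1 := by rw [← Walk.length_reverse]; exact hl1
        have h3 := hc'.three_le_length
        simp [Walk.length_cons, hl2] at h3
      obtain ⟨q₄, hq₄⟩ := new_to_dgr w₄ (fun t ht hteq => hbw4 (hteq ▸ ht))
      rcases Tnew_adj_b hadj1 with hD1 | ⟨hA1, hR1⟩ <;>
        rcases Tnew_adj_b hadj2 with hD2 | ⟨hA2, hR2⟩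
      · -- both edges at b are old edges
        obtain ⟨pzy, hpzy⟩ := proj_walk q₄
        have hpzypath : pzy.IsPath := by
          rw [Walk.isPath_def, hpzy, hq₄]
          exact (List.nodup_map_iff Subtype.coe_injective).mpr hw₄path.support_nodup
        have hbD1 : T.Adj b ↑y := hD1
        have hbD2 : T.Adj b ↑z := hD2
        set P1 : T.Walk b ↑y := Walk.cons hbD1 Walk.nil with hP1def
        set P2 : T.Walk b ↑y := Walk.cons hbD2 pzy with hP2def
        have hP1 : P1.IsPath := by simp [hP1def, Walk.isPath_def, hbD1.ne]
        have hP2 : P2.IsPath := by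
          rw [hP2def, Walk.cons_isPath_iff]
          refine ⟨hpzypath, ?_⟩
          rw [hpzy, hq₄]
          simp only [List.mem_map, not_exists, not_and]
          intro t ht hteq
          exact val_ne_b_of_ne (hb := hb) (fun hh => hbw4 (hh ▸ ht)) hteq
        have heq := path_eq_of_acyclic hAc P1 P2 hP1 hP2
        have hlen : P1.length = P2.length := congrArg Walk.length heq
        have h0 : pzy.length = 0 := by
          simp only [hP1def, hP2def, Walk.length_cons, Walk.length_nil] at hlen
          omega
        have hzy := Walk.eq_of_length_eq_zero (p := pzy) h0
        exact hyz (Subtype.ext hzy.symm)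
      · -- first old, second new
        exact hR2 (Reachable.trans ⟨q₄⟩ (Adj.reachable hD1.symm))
      · -- first new, second old
        exact hR1 (Reachable.trans ⟨q₄.reverse⟩ (Adj.reachable hD2.symm))
      · -- both new
        obtain ⟨pyz, hpyz⟩ := proj_walk q₄.reverse
        have hpyzpath : pyz.IsPath := by
          rw [Walk.isPath_def, hpyz, Walk.support_reverse, List.map_reverse,
            List.nodup_reverse, hq₄]
          exact (List.nodup_map_iff Subtype.coe_injective).mpr hw₄path.support_nodup
        have hyA : T.Adj ↑y a := hA1.symm
        set P1 : T.Walk ↑y ↑z := Walk.cons hyA (Walk.cons hA2 Walk.nil) with hP1def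
        have hP1 : P1.IsPath := by
          simp [hP1def, Walk.isPath_def]
          refine ⟨⟨y.2, fun hh => hyz (Subtype.ext hh)⟩, fun hh => z.2 hh.symm⟩
        have heq := path_eq_of_acyclic hAc P1 pyz hP1 hpyzpath
        have hmem : a ∈ P1.support := by simp [hP1def]
        rw [heq, hpyz] at hmem
        simp only [List.mem_map] at hmem
        obtain ⟨t, _, hteq⟩ := hmem
        exact t.2 hteq

lemma Tnew_join {T : SimpleGraph V} (f : V → Finset ℕ) (hT : T.IsTree)
    (hJ : ∀ (x : ℕ) (u v : V) (p : T.Walk u v), p.IsPath → x ∈ f u → x ∈ f v →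
      ∀ w ∈ p.support, x ∈ f w)
    (a b : V) (hb : b ≠ a)
    (hstar : ∀ x ∈ f a, x ∉ f b → ∀ u v : V, u ≠ a → v ≠ a → x ∈ f u → x ∈ f v →
      ∃ p : T.Walk u v, a ∉ p.support) :
    ∀ (x : ℕ) (u v : {v : V // v ≠ a}) (p : (Tnew T a hb).Walk u v), p.IsPath →
      x ∈ f ↑u → x ∈ f ↑v → ∀ w ∈ p.support, x ∈ f ↑w := by
  intro x u v p hp hxu hxv
  suffices hex : ∃ q : (Tnew T a hb).Walk u v, ∀ t ∈ q.support, x ∈ f ↑t by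
    obtain ⟨q, hq⟩ := hex
    have hup := Tnew_acyclic hT a b hb
    have heq : p = (q.toPath : (Tnew T a hb).Walk u v) :=
      path_eq_of_acyclic hup p _ hp q.toPath.2
    intro w hw
    rw [heq] at hw
    exact hq w (Walk.support_toPath_subset q hw)
  -- the walk-to-b subclaim
  have toB : x ∈ f b → ∀ w : {v : V // v ≠ a}, x ∈ f ↑w →
      ∃ qw : (Tnew T a hb).Walk w ⟨b, hb⟩, ∀ t ∈ qw.support, x ∈ f ↑t := by
    intro hxb w hxw
    obtain ⟨p0⟩ := hT.isConnected.preconnected ↑w b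
    set pb : T.Walk ↑w b := (p0.toPath : T.Walk ↑w b) with hpbdef
    have hpbpath : pb.IsPath := p0.toPath.2
    have hZ : ∀ t ∈ pb.support, x ∈ f t := hJ x ↑w b pb hpbpath hxw hxb
    by_cases hna : a ∈ pb.support
    case neg =>
      obtain ⟨q, hq⟩ := lift_walk (a := a) pb (fun t ht hta => hna (hta ▸ ht)) w.2 hb
      obtain ⟨q', hq'⟩ := dgr_to_new (hb := hb) q
      refine ⟨q', fun t ht => ?_⟩
      have : (↑t : V) ∈ pb.support := by
        rw [← hq]
        exact List.mem_map_of_mem (hq' ▸ ht)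
      exact hZ _ this
    case pos =>
      set q1 := pb.takeUntil a hna with hq1def
      have hq1path : q1.IsPath := hpbpath.takeUntil hna
      have hanw : a ≠ ↑w := fun hh => w.2 hh.symm
      obtain ⟨y, hadj1, q2, hq2eq⟩ := Walk.exists_eq_cons_of_ne hanw q1.reverse
      have hq1rev : q1.reverse.IsPath := hq1path.reverse
      rw [hq2eq] at hq1rev
      have hq2path : q2.IsPath := hq1rev.of_cons
      have hanq2 : a ∉ q2.support := ((Walk.cons_isPath_iff _ _).mp hq1rev).2
      have hy : y ≠ a := fun hya => hanq2 (hya ▸ q2.start_mem_support)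
      have hq2Z : ∀ t ∈ q2.support, x ∈ f t := by
        intro t ht
        apply hZ
        apply Walk.support_takeUntil_subset pb hna
        have : t ∈ q1.reverse.support := by rw [hq2eq]; simp [ht]
        rwa [Walk.support_reverse, List.mem_reverse] at this
      have hxy : x ∈ f y := hq2Z y q2.start_mem_support
      obtain ⟨q2', hq2'⟩ := lift_walk (a := a) q2 (fun t ht hta => hanq2 (hta ▸ ht)) hy w.2
      obtain ⟨w2, hw2⟩ := dgr_to_new (hb := hb) q2'
      have hw2Z : ∀ t ∈ w2.support, x ∈ f ↑t := by
        intro t ht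
        have : (↑t : V) ∈ q2.support := by
          rw [← hq2']
          exact List.mem_map_of_mem (hw2 ▸ ht)
        exact hq2Z _ this
      by_cases hR : (Dgr T a).Reachable ⟨y, hy⟩ ⟨b, hb⟩
      · obtain ⟨qd⟩ := hR
        obtain ⟨pyb0, hpyb0⟩ := proj_walk qd
        set pyb : T.Walk ↑y b := (pyb0.toPath : T.Walk ↑y b) with hpybdef
        have hpybpath : pyb.IsPath := pyb0.toPath.2
        have hpybZ : ∀ t ∈ pyb.support, x ∈ f t := hJ x ↑y b pyb hpybpath hxy hxb
        have hpybna : a ∉ pyb.support := by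
          intro hmem
          have := Walk.support_toPath_subset pyb0 hmem
          rw [hpyb0] at this
          simp only [List.mem_map] at this
          obtain ⟨t, _, hteq⟩ := this
          exact t.2 hteq
        obtain ⟨qyb, hqyb⟩ := lift_walk (a := a) pyb
          (fun t ht hta => hpybna (hta ▸ ht)) hy hb
        obtain ⟨wyb, hwyb⟩ := dgr_to_new (hb := hb) qyb
        refine ⟨w2.reverse.append wyb, fun t ht => ?_⟩
        rw [Walk.mem_support_append_iff] at ht
        rcases ht with ht | ht
        · rw [Walk.support_reverse, List.mem_reverse] at ht
          exact hw2Z t ht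
        · have : (↑t : V) ∈ pyb.support := by
            rw [← hqyb]
            exact List.mem_map_of_mem (hwyb ▸ ht)
          exact hpybZ _ this
      · have hedge : (Tnew T a hb).Adj ⟨y, hy⟩ ⟨b, hb⟩ := Or.inr (Or.inr ⟨rfl, hadj1, hR⟩)
        refine ⟨w2.reverse.append (Walk.cons hedge Walk.nil), fun t ht => ?_⟩
        rw [Walk.mem_support_append_iff] at ht
        rcases ht with ht | ht
        · rw [Walk.support_reverse, List.mem_reverse] at ht
          exact hw2Z t ht
        · simp only [Walk.support_cons, Walk.support_nil, List.mem_cons,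
            List.mem_singleton] at ht
          rcases ht with rfl | rfl | h
          · exact hxy
          · exact hxb
          · exact absurd h List.not_mem_nil
  -- main construction
  obtain ⟨p0⟩ := hT.isConnected.preconnected ↑u ↑v
  set pT : T.Walk ↑u ↑v := (p0.toPath : T.Walk ↑u ↑v) with hpTdef
  have hpT : pT.IsPath := p0.toPath.2
  have hZ : ∀ t ∈ pT.support, x ∈ f t := hJ x ↑u ↑v pT hpT hxu hxv
  by_cases hna : a ∈ pT.support
  case neg =>
    obtain ⟨q, hq⟩ := lift_walk (a := a) pT (fun t ht hta => hna (hta ▸ ht)) u.2 v.2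
    obtain ⟨q', hq'⟩ := dgr_to_new (hb := hb) q
    refine ⟨q', fun t ht => ?_⟩
    have : (↑t : V) ∈ pT.support := by
      rw [← hq]
      exact List.mem_map_of_mem (hq' ▸ ht)
    exact hZ _ this
  case pos =>
    have hxa : x ∈ f a := hZ a hna
    by_cases hxb : x ∈ f b
    · obtain ⟨qu, hqu⟩ := toB hxb u hxu
      obtain ⟨qv, hqv⟩ := toB hxb v hxv
      refine ⟨qu.append qv.reverse, fun t ht => ?_⟩
      rw [Walk.mem_support_append_iff] at ht
      rcases ht with ht | ht
      · exact hqu t ht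
      · rw [Walk.support_reverse, List.mem_reverse] at ht
        exact hqv t ht
    · exfalso
      obtain ⟨pst, hpst⟩ := hstar x hxa hxb ↑u ↑v u.2 v.2 hxu hxv
      have heq := path_eq_of_acyclic hT.IsAcyclic pT
        (pst.toPath : T.Walk ↑u ↑v) hpT pst.toPath.2
      rw [heq] at hna
      exact hpst (Walk.support_toPath_subset pst hna)

end Surgery

section Assemble

open SimpleGraph Walk

/-- Transport a tree with the join property along an equivalence of vertex types. -/
lemma hasJoinTree_transport {V W : Type} (e : V ≃ W) (T : SimpleGraph W)
    (f : V → Finset ℕ) (g : W → Finset ℕ) (hfg : ∀ v, f v = g (e v))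
    (hT : T.IsTree)
    (hJ : ∀ (x : ℕ) (u v : W) (p : T.Walk u v), p.IsPath → x ∈ g u → x ∈ g v →
      ∀ w ∈ p.support, x ∈ g w) :
    ∃ T' : SimpleGraph V, T'.IsTree ∧
      ∀ (x : ℕ) (u v : V) (p : T'.Walk u v), p.IsPath → x ∈ f u → x ∈ f v →
        ∀ w ∈ p.support, x ∈ f w := by
  let φ : T.comap e →g T := ⟨e, fun {u v} h => h⟩
  let ψ : T →g T.comap e := ⟨e.symm, fun {u v} h => by
    show T.Adj (e (e.symm u)) (e (e.symm v))
    simpa using h⟩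
  refine ⟨T.comap e, ⟨?_, ?_⟩, ?_⟩
  · rw [connected_iff]
    constructor
    · intro s t
      obtain ⟨p⟩ := hT.isConnected.preconnected (e s) (e t)
      exact ⟨(p.map ψ).copy (by exact e.symm_apply_apply s) (by exact e.symm_apply_apply t)⟩
    · obtain ⟨w⟩ := hT.isConnected.nonempty
      exact ⟨e.symm w⟩
  · intro v c hc
    have hcy : (c.map φ).IsCycle :=
      (Walk.map_isCycle_iff_of_injective
        (show Function.Injective (φ : V → W) from e.injective)).mpr hc
    exact hT.IsAcyclic _ hcy
  · intro x u v p hp hxu hxv w hw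
    have hPm : (p.map φ).IsPath :=
      Walk.map_isPath_of_injective (show Function.Injective (φ : V → W) from e.injective) hp
    have := hJ x (e u) (e v) (p.map φ) hPm (by rw [← hfg]; exact hxu)
      (by rw [← hfg]; exact hxv) (e w)
      (by rw [Walk.support_map]; exact List.mem_map_of_mem hw)
    rw [hfg]
    exact this

/-- Part 2: a retract of an atom set with a join tree has a join tree. -/
lemma subJoinTree (B' : Finset Atom) (hne : B'.Nonempty) (h : ℕ → ℕ)
    (hfix : ∀ x ∈ varsOf B', h x = x) :
    ∀ (n : ℕ) (B : Finset Atom), B.card = n → B' ⊆ B →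
      (∀ A ∈ B, mapAtom h A ∈ B') → hasJoinTree B → hasJoinTree B' := by
  intro n
  induction n using Nat.strong_induction_on with
  | _ n ih =>
    intro B hcard hsub hmap hjt
    by_cases hBB : B ⊆ B'
    · rwa [Finset.Subset.antisymm hBB hsub] at hjt
    · obtain ⟨A₀, hA₀B, hA₀⟩ := Finset.not_subset.mp hBB
      obtain ⟨T, hT, hTJ⟩ := hjt
      classical
      obtain ⟨Ar, hAr⟩ := hne
      set r : {A : Atom // A ∈ B} := ⟨Ar, hsub hAr⟩ with hrdef
      set O : Finset {A : Atom // A ∈ B} := Finset.univ.filter (fun v => v.1 ∉ B') with hOdef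
      have hOne : O.Nonempty := ⟨⟨A₀, hA₀B⟩, by simp [hOdef, hA₀]⟩
      obtain ⟨a, haO, hamax⟩ := O.exists_max_image (fun v => T.dist r v) hOne
      have haB' : a.1 ∉ B' := by
        have := Finset.mem_filter.mp (hOdef ▸ haO)
        exact this.2
      set b : {A : Atom // A ∈ B} := ⟨mapAtom h a.1, hsub (hmap a.1 a.2)⟩ with hbdef
      have hb : b ≠ a := by
        intro hh
        apply haB'
        rw [← congrArg Subtype.val hh]
        exact hmap a.1 a.2
      have hstar : ∀ x ∈ a.1.vars, x ∉ b.1.vars →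
          ∀ u v : {A : Atom // A ∈ B}, u ≠ a → v ≠ a → x ∈ u.1.vars → x ∈ v.1.vars →
          ∃ p : T.Walk u v, a ∉ p.support := by
        intro x hxa hxb u v hu hv hxu hxv
        have hxB' : x ∉ varsOf B' := by
          intro hmem
          apply hxb
          have hfx := hfix x hmem
          have := mem_vars_mapAtom (f := h) hxa
          rw [hfx] at this
          exact this
        have hclaim : ∀ t : {A : Atom // A ∈ B}, t ≠ a → x ∈ t.1.vars →
            ∃ pt : T.Walk r t, a ∉ pt.support := by
          intro t htne hxt
          have htO : t ∈ O := by
            rw [hOdef]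
            simp only [Finset.mem_filter, Finset.mem_univ, true_and]
            intro htB'
            exact hxB' (mem_varsOf.mpr ⟨t.1, htB', hxt⟩)
          have hdist : T.dist r t ≤ T.dist r a := hamax t htO
          obtain ⟨pw, hpw⟩ := hT.isConnected.exists_walk_length_eq_dist r t
          refine ⟨pw, fun hmem => ?_⟩
          have hsplit := pw.take_spec hmem
          have hlen : (pw.takeUntil a hmem).length + (pw.dropUntil a hmem).length
              = pw.length := by
            rw [← Walk.length_append, hsplit]
          have h1 : T.dist r a ≤ (pw.takeUntil a hmem).length := SimpleGraph.dist_le _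
          have h2 : (pw.dropUntil a hmem).length ≠ 0 := by
            intro h0
            exact htne (Walk.eq_of_length_eq_zero h0).symm
          omega
        obtain ⟨pu, hpu⟩ := hclaim u hu hxu
        obtain ⟨pv, hpv⟩ := hclaim v hv hxv
        refine ⟨pu.reverse.append pv, fun hmem => ?_⟩
        rw [Walk.mem_support_append_iff] at hmem
        rcases hmem with hm | hm
        · rw [Walk.support_reverse, List.mem_reverse] at hm
          exact hpu hm
        · exact hpv hm
      have hconn := Tnew_connected hT a b hb
      have hacyc := Tnew_acyclic hT a b hb
      have hjoin := Tnew_join (fun v => v.1.vars) hT hTJ a b hb hstar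
      set e : {A : Atom // A ∈ B.erase a.1} ≃ {v : {A : Atom // A ∈ B} // v ≠ a} :=
        { toFun := fun A => ⟨⟨A.1, Finset.mem_of_mem_erase A.2⟩,
            fun hh => (Finset.ne_of_mem_erase A.2) (congrArg Subtype.val hh)⟩
          invFun := fun v => ⟨v.1.1,
            Finset.mem_erase.mpr ⟨fun hh => v.2 (Subtype.ext hh), v.1.2⟩⟩
          left_inv := fun A => rfl
          right_inv := fun v => rfl }
      obtain ⟨T₂, hT₂, hJ₂⟩ := hasJoinTree_transport e (Tnew T a hb)
        (fun A => A.1.vars) (fun v => v.1.1.vars) (fun v => rfl)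
        ⟨hconn, hacyc⟩ hjoin
      have hjt2 : hasJoinTree (B.erase a.1) := ⟨T₂, hT₂, hJ₂⟩
      exact ih (B.erase a.1).card
        (by rw [← hcard]; exact Finset.card_erase_lt_of_mem a.2)
        (B.erase a.1) rfl
        (fun A hA => Finset.mem_erase.mpr
          ⟨fun hh => haB' (hh ▸ hA), hsub hA⟩)
        (fun A hA => hmap A (Finset.mem_of_mem_erase hA)) hjt2

end Assemble

/-- If `Q` is free-connex acyclic and `Q'` is a minimal CQ equivalent
to `Q` with `head(Q') = head(Q)` and `body(Q') ⊆ body(Q)`, then `Q'` is free-connex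
acyclic. -/
theorem statement16 (σ : Schema) (Q Q' : CQ) (hQ : isCQ σ Q) (hQ' : isCQ σ Q')
    (hfc : isFreeConnex Q) (hmin : isMinimal Q') (hequiv : equivCQ Q Q')
    (hhead : Q'.head = Q.head) (hbody : Q'.body ⊆ Q.body) :
    isFreeConnex Q' := by
  obtain ⟨h, hmem, hfixB, hfixH⟩ := exists_retraction Q Q' hQ.2.2.2 hmin hequiv hhead hbody
  constructor
  · exact subJoinTree Q'.body hQ'.1 h hfixB Q.body.card Q.body rfl hbody hmem hfc.1
  · have hfix' : ∀ x ∈ varsOf (insert Q'.head Q'.body), h x = x := by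
      intro x hx
      obtain ⟨A, hA, hxA⟩ := mem_varsOf.mp hx
      rcases Finset.mem_insert.mp hA with rfl | hA
      · exact hfixH x (by rwa [hhead] at hxA)
      · exact hfixB x (mem_varsOf.mpr ⟨A, hA, hxA⟩)
    have hsub' : insert Q'.head Q'.body ⊆ insert Q.head Q.body := by
      intro A hA
      rcases Finset.mem_insert.mp hA with rfl | hA
      · exact Finset.mem_insert.mpr (Or.inl hhead)
      · exact Finset.mem_insert.mpr (Or.inr (hbody hA))
    have hmap' : ∀ A ∈ insert Q.head Q.body, mapAtom h A ∈ insert Q'.head Q'.body := by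
      intro A hA
      rcases Finset.mem_insert.mp hA with rfl | hA
      · rw [mapAtom_eq_self _ hfixH]
        exact Finset.mem_insert.mpr (Or.inl hhead.symm)
      · exact Finset.mem_insert.mpr (Or.inr (hmem A hA))
    exact subJoinTree (insert Q'.head Q'.body) ⟨Q'.head, Finset.mem_insert_self _ _⟩
      h hfix' (insert Q.head Q.body).card (insert Q.head Q.body) rfl hsub' hmap' hfc.2
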